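/- (Chaos game becomes dense when all cylinders are visited.) In the setting of the previous statement, let v_0 ∈ F and choose i_0 ∈ P_δ with v_0 ∈ S_{i_0} F. Suppose letters i_1,...,i_n ∈ {1,...,N} are such that for every j ∈ P_δ there exists 0 ≤ k ≤ n with [i_k ... i_1 i_0] ⊆ [j] (as cylinders; for k = 0 this means [i_0] ⊆ [j]). Then the finite set {v_0, S_{i_1}v_0, S_{i_2}S_{i_1}v_0, ..., S_{i_n}···S_{i_1}v_0} is 2δΔ-dense in F, where Δ = diam F. -/

import Mathlib

/-!
Every `z ∈ F` lies in a piece `S_j F` with `j ∈ P_δ`, and the orbit point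
`x_k = S_{i_k ⋯ i_1 i_0} x` (with `v_0 = S_{i_0} x`) lies in `S_w F` for `w = i_k ⋯ i_1 i_0`.
Nested cylinders `[w] ⊆ [j]` force one of `w`, `j` to be a prefix of the other, so `z` and `x_k`
lie in a common piece `S_p F` with `r_p ≤ δ`, whose diameter is at most `r_p Δ ≤ δ Δ`.
-/

/-- The cylinder set of a finite word: infinite sequences beginning with that word. -/
def cyl {N : ℕ} (l : List (Fin N)) : Set (ℕ → Fin N) :=
  {ω | ∀ k : Fin l.length, ω k = l.get k}

/-- Product of contraction ratios along a word. -/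
def rword {N : ℕ} (r : Fin N → ℝ) (l : List (Fin N)) : ℝ := (l.map r).prod

/-- The stopping set P_δ = { i : r_i ≤ δ < r_{i^-} }. -/
def Pdelta {N : ℕ} (r : Fin N → ℝ) (δ : ℝ) : Set (List (Fin N)) :=
  {l | rword r l ≤ δ ∧ δ < rword r l.dropLast}


/-- Composition S_i = S_{i_1} ∘ ⋯ ∘ S_{i_n} along a word. -/
def Sword {N : ℕ} {X : Type*} (S : Fin N → X → X) (l : List (Fin N)) (v : X) : X :=
  l.foldr (fun a w => S a w) v

/-- The chaos game orbit: x_0 = v, x_{k+1} = S_{i_{k+1}} x_k, where i_{k+1} = ω k. -/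
def orbit {N : ℕ} {X : Type*} (S : Fin N → X → X) (ω : ℕ → Fin N) (v : X) : ℕ → X
  | 0 => v
  | k + 1 => S (ω k) (orbit S ω v k)

/-- The word i_k i_{k-1} ... i_1 of the first k chosen letters, most recent first
(here i_{m} = ω (m-1)). -/
def histWord {N : ℕ} (ω : ℕ → Fin N) (k : ℕ) : List (Fin N) :=
  List.ofFn (fun t : Fin k => ω (k - 1 - (t : ℕ)))

open Set Metric

section Words
variable {N : ℕ} {X : Type*}

lemma rword_append (r : Fin N → ℝ) (a b : List (Fin N)) :
    rword r (a ++ b) = rword r a * rword r b := by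
  simp [rword]

lemma rword_nonneg {r : Fin N → ℝ} (h0 : ∀ i, 0 ≤ r i) (l : List (Fin N)) : 0 ≤ rword r l :=
  List.prod_nonneg (by simpa using fun i _ => h0 i)

lemma rword_le_one {r : Fin N → ℝ} (h0 : ∀ i, 0 ≤ r i) (h1 : ∀ i, r i ≤ 1)
    (l : List (Fin N)) : rword r l ≤ 1 := by
  simpa [rword] using List.prod_map_le_prod_map₀ r (fun _ => 1) (fun i _ => h0 i) (fun i _ => h1 i)

lemma rword_append_le_right {r : Fin N → ℝ} (h0 : ∀ i, 0 ≤ r i) (h1 : ∀ i, r i ≤ 1)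
    (a b : List (Fin N)) : rword r (a ++ b) ≤ rword r b := by
  rw [rword_append]
  exact mul_le_of_le_one_left (rword_nonneg h0 b) (rword_le_one h0 h1 a)

lemma lt_one_of_mem_Pdelta {r : Fin N → ℝ} (h0 : ∀ i, 0 ≤ r i) (h1 : ∀ i, r i ≤ 1)
    {δ : ℝ} {l : List (Fin N)} (hl : l ∈ Pdelta r δ) : δ < 1 :=
  hl.2.trans_le (rword_le_one h0 h1 _)

lemma Sword_append (S : Fin N → X → X) (a b : List (Fin N)) (v : X) :
    Sword S (a ++ b) v = Sword S a (Sword S b v) :=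
  List.foldr_append

lemma mapsTo_Sword {S : Fin N → X → X} {F : Set X} (h : ∀ i, MapsTo (S i) F F)
    (l : List (Fin N)) : MapsTo (Sword S l) F F := by
  induction l with
  | nil => exact mapsTo_id F
  | cons a l ih => exact (h a).comp ih

lemma image_Sword_append_subset {S : Fin N → X → X} {F : Set X} (h : ∀ i, MapsTo (S i) F F)
    (p t : List (Fin N)) : Sword S (p ++ t) '' F ⊆ Sword S p '' F := by
  rintro _ ⟨x, hx, rfl⟩
  exact ⟨Sword S t x, mapsTo_Sword h t hx, (Sword_append S p t x).symm⟩

lemma histWord_succ (ω : ℕ → Fin N) (k : ℕ) :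
    histWord ω (k + 1) = ω k :: histWord ω k := by
  simp only [histWord, List.ofFn_succ, Fin.val_zero, Fin.val_succ]
  exact congrArg₂ _ (by simp) (congrArg _ (funext fun t => congrArg ω (by omega)))

lemma orbit_eq_Sword_histWord (S : Fin N → X → X) (ω : ℕ → Fin N) (v : X) (k : ℕ) :
    orbit S ω v k = Sword S (histWord ω k) v := by
  induction k with
  | zero => rfl
  | succ k ih => rw [orbit, ih, histWord_succ]; rfl

lemma prefix_or_prefix_of_cyl_subset {l j : List (Fin N)} (h : cyl l ⊆ cyl j) :
    j <+: l ∨ l <+: j := by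
  rcases l with _ | ⟨a, l'⟩
  · exact Or.inr List.nil_prefix
  set l := a :: l'
  -- the sequence `l a a a …` lies in `cyl l`, hence in `cyl j`
  have hagree : ∀ k (hl : k < l.length) (hj : k < j.length), l[k] = j[k] := by
    intro k hl hj
    simpa [hl] using @h (fun m => l.getD m a) (fun m => by simp) ⟨k, hj⟩
  rcases le_total j.length l.length with hlen | hlen
  · refine Or.inl (List.prefix_iff_eq_take.2 (List.ext_getElem (by simp [hlen]) ?_))
    intro m hm _
    simp [hagree m (by omega) hm]
  · refine Or.inr (List.prefix_iff_eq_take.2 (List.ext_getElem (by simp [hlen]) ?_))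
    intro m hm _
    simp [hagree m hm (by omega)]

end Words

section Metric
variable {N : ℕ} {X : Type*} [PseudoMetricSpace X] {S : Fin N → X → X} {r : Fin N → ℝ}

lemma dist_Sword (hsim : ∀ i x y, dist (S i x) (S i y) = r i * dist x y)
    (l : List (Fin N)) (a b : X) :
    dist (Sword S l a) (Sword S l b) = rword r l * dist a b := by
  induction l with
  | nil => simp [Sword, rword]
  | cons i l ih =>
    change dist (S i (Sword S l a)) (S i (Sword S l b)) = _
    rw [hsim, ih]
    simp [rword, mul_assoc]

lemma dist_le_rword_mul_diam (hsim : ∀ i x y, dist (S i x) (S i y) = r i * dist x y)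
    (h0 : ∀ i, 0 ≤ r i) {F : Set X} (hF : Bornology.IsBounded F) {p : List (Fin N)} {y z : X}
    (hy : y ∈ Sword S p '' F) (hz : z ∈ Sword S p '' F) :
    dist y z ≤ rword r p * diam F := by
  obtain ⟨a, ha, rfl⟩ := hy
  obtain ⟨b, hb, rfl⟩ := hz
  rw [dist_Sword hsim]
  exact mul_le_mul_of_nonneg_left (dist_le_diam_of_mem hF ha hb) (rword_nonneg h0 p)

end Metric

section Stopping
variable {N : ℕ} {X : Type*} {S : Fin N → X → X} {r : Fin N → ℝ}

/-- Every point of a self-similar set lies in `S_j F` for some `j ∈ P_δ`: refine an address of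
the point letter by letter until the ratio drops to `δ`, which happens within `m` steps once
`ρ ^ m < δ` for a common bound `ρ < 1` on the ratios. -/
lemma exists_mem_Pdelta_mem_image_Sword (h0 : ∀ i, 0 ≤ r i) (h1 : ∀ i, r i < 1) {F : Set X}
    (hF : F ⊆ ⋃ i, S i '' F) {δ : ℝ} (hδ0 : 0 < δ) (hδ1 : δ < 1) {z : X} (hz : z ∈ F) :
    ∃ j ∈ Pdelta r δ, z ∈ Sword S j '' F := by
  obtain ⟨ρ, hρ1, hrρ⟩ : ∃ ρ < 1, ∀ i, r i ≤ ρ := by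
    rcases isEmpty_or_nonempty (Fin N) with hN | hN
    · exact ⟨0, one_pos, fun i => isEmptyElim i⟩
    · obtain ⟨i, hi⟩ := Finite.exists_max r
      exact ⟨r i, h1 i, hi⟩
  obtain ⟨m, hm⟩ := exists_pow_lt_of_lt_one hδ0 hρ1
  suffices key : ∀ m (l : List (Fin N)), z ∈ Sword S l '' F → δ < rword r l →
      rword r l * ρ ^ m ≤ δ → ∃ j ∈ Pdelta r δ, z ∈ Sword S j '' F from
    key m [] ⟨z, hz, rfl⟩ (by simpa [rword] using hδ1) (by simpa [rword] using hm.le)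
  intro m
  induction m with
  | zero => intro l _ hlt hle; rw [pow_zero, mul_one] at hle; linarith
  | succ m ih =>
    rintro l ⟨y, hy, rfl⟩ hlt hle
    obtain ⟨i, x, hx, rfl⟩ := mem_iUnion.1 (hF hy)
    have hzl : Sword S l (S i x) ∈ Sword S (l ++ [i]) '' F := ⟨x, hx, Sword_append S l [i] x⟩
    by_cases hstop : rword r (l ++ [i]) ≤ δ
    · exact ⟨l ++ [i], ⟨hstop, by rwa [List.dropLast_concat]⟩, hzl⟩
    refine ih _ hzl (not_le.1 hstop) ?_
    have hρm : 0 ≤ ρ ^ m := pow_nonneg ((h0 i).trans (hrρ i)) m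
    calc rword r (l ++ [i]) * ρ ^ m = rword r l * (r i * ρ ^ m) := by
          simp [rword, mul_assoc]
      _ ≤ rword r l * (ρ * ρ ^ m) := by
          gcongr
          · exact rword_nonneg h0 l
          · exact hrρ i
      _ = rword r l * ρ ^ (m + 1) := by ring
      _ ≤ δ := hle

end Stopping

theorem stmt10_general {N d : ℕ}
    (S : Fin N → EuclideanSpace ℝ (Fin d) → EuclideanSpace ℝ (Fin d))
    (r : Fin N → ℝ) (hr : ∀ i, r i ∈ Set.Ioo (0 : ℝ) 1)
    (hsim : ∀ i x y, dist (S i x) (S i y) = r i * dist x y)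
    (F : Set (EuclideanSpace ℝ (Fin d)))
    (hFc : IsCompact F)
    (hFinv : F = ⋃ i, S i '' F)
    (Δ : ℝ) (hΔ : Δ = Metric.diam F)
    (δ : ℝ) (hδ0 : 0 < δ)
    (v0 : EuclideanSpace ℝ (Fin d))
    (i0 : List (Fin N)) (hi0 : i0 ∈ Pdelta r δ) (hv0 : v0 ∈ Sword S i0 '' F)
    (n : ℕ) (ω : ℕ → Fin N)
    (hvisit : ∀ j ∈ Pdelta r δ, ∃ k ≤ n, cyl (histWord ω k ++ i0) ⊆ cyl j) :
    ∀ z ∈ F, ∃ k ≤ n, dist z (orbit S ω v0 k) ≤ 2 * δ * Δ := by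
  intro z hz
  have hr0 : ∀ i, 0 ≤ r i := fun i => (hr i).1.le
  have hr1 : ∀ i, r i ≤ 1 := fun i => (hr i).2.le
  have hmaps : ∀ i, MapsTo (S i) F F := fun i x hx =>
    hFinv ▸ mem_iUnion_of_mem i (mem_image_of_mem (S i) hx)
  obtain ⟨j, hj, hzj⟩ := exists_mem_Pdelta_mem_image_Sword hr0 (fun i => (hr i).2)
    hFinv.subset hδ0 (lt_one_of_mem_Pdelta hr0 hr1 hi0) hz
  obtain ⟨k, hk, hsub⟩ := hvisit j hj
  have horb : orbit S ω v0 k ∈ Sword S (histWord ω k ++ i0) '' F := by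
    obtain ⟨x0, hx0, rfl⟩ := hv0
    exact ⟨x0, hx0, by rw [orbit_eq_Sword_histWord, Sword_append]⟩
  have hl : rword r (histWord ω k ++ i0) ≤ δ := (rword_append_le_right hr0 hr1 _ i0).trans hi0.1
  generalize histWord ω k ++ i0 = l at hl hsub horb
  obtain ⟨p, hp, hzp, horbp⟩ : ∃ p, rword r p ≤ δ ∧ z ∈ Sword S p '' F ∧
      orbit S ω v0 k ∈ Sword S p '' F := by
    rcases prefix_or_prefix_of_cyl_subset hsub with ⟨t, rfl⟩ | ⟨t, rfl⟩
    · exact ⟨j, hj.1, hzj, image_Sword_append_subset hmaps j t horb⟩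
    · exact ⟨l, hl, image_Sword_append_subset hmaps l t hzj, horb⟩
  have hΔ0 : 0 ≤ Δ := hΔ ▸ diam_nonneg
  refine ⟨k, hk, ?_⟩
  calc dist z (orbit S ω v0 k) ≤ rword r p * Δ :=
        hΔ ▸ dist_le_rword_mul_diam hsim hr0 hFc.isBounded hzp horbp
    _ ≤ δ * Δ := mul_le_mul_of_nonneg_right hp hΔ0
    _ ≤ 2 * δ * Δ := by nlinarith

/-- if the symbolic orbit words i_k...i_1 i_0, 0 ≤ k ≤ n, visit
every cylinder [j], j ∈ P_δ, then {v_0, S_{i_1}v_0, ..., S_{i_n}⋯S_{i_1}v_0}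
is 2δΔ-dense in F, where Δ = diam F. -/
theorem stmt10 {N d : ℕ} (hN : 0 < N)
    (S : Fin N → EuclideanSpace ℝ (Fin d) → EuclideanSpace ℝ (Fin d))
    (r : Fin N → ℝ) (hr : ∀ i, r i ∈ Set.Ioo (0 : ℝ) 1)
    (hsim : ∀ i x y, dist (S i x) (S i y) = r i * dist x y)
    (F : Set (EuclideanSpace ℝ (Fin d)))
    (hFc : IsCompact F) (hFne : F.Nonempty)
    (hFinv : F = ⋃ i, S i '' F)
    (U : Set (EuclideanSpace ℝ (Fin d)))
    (hUopen : IsOpen U) (hUbdd : Bornology.IsBounded U)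
    (hUsub : ∀ i, S i '' U ⊆ U)
    (hUdisj : ∀ i j, i ≠ j → Disjoint (S i '' U) (S j '' U))
    (hUF : (U ∩ F).Nonempty)
    (Δ : ℝ) (hΔ : Δ = Metric.diam F)
    (δ : ℝ) (hδ0 : 0 < δ) (hδ : ∀ i, δ < r i)
    (v0 : EuclideanSpace ℝ (Fin d))
    (i0 : List (Fin N)) (hi0 : i0 ∈ Pdelta r δ) (hv0 : v0 ∈ Sword S i0 '' F)
    (n : ℕ) (ω : ℕ → Fin N)
    (hvisit : ∀ j ∈ Pdelta r δ, ∃ k ≤ n, cyl (histWord ω k ++ i0) ⊆ cyl j) :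
    ∀ z ∈ F, ∃ k ≤ n, dist z (orbit S ω v0 k) ≤ 2 * δ * Δ :=
  stmt10_general S r hr hsim F hFc hFinv Δ hΔ δ hδ0 v0 i0 hi0 hv0 n ω hvisit
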